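/- arXiv:2212.08368 — 3 statements merged into one kernel-verified Lean document; each statement's English description precedes it below -/
import Mathlib

section
/- There exists an increasing function f₂ : MorseGauges × ℝ≥1 → MorseGauges such that for any geodesic metric space X, any Morse gauge M, any C ≥ 1, any M-Morse geodesic γ : I → X, and any subinterval J ⊆ I, the restriction γ|_J is f₂(M, C)-Morse. More generally, any subsegment of an M-Morse C-quasi-geodesic is f₂(M, C)-Morse. -/
open Set Metric

universe u

/-- `γ` restricted to `I` is a `(lam, eps)`-quasi-geodesic. -/
def IsQuasiGeodesicOn {X : Type*} [MetricSpace X] (γ : ℝ → X) (I : Set ℝ)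
    (lam eps : ℝ) : Prop :=
  ∀ s ∈ I, ∀ t ∈ I,
    (1 / lam) * |s - t| - eps ≤ dist (γ s) (γ t) ∧ dist (γ s) (γ t) ≤ lam * |s - t| + eps

/-- `γ` restricted to `I` is a (unit-speed) geodesic. -/
def IsGeodesicOn {X : Type*} [MetricSpace X] (γ : ℝ → X) (I : Set ℝ) : Prop :=
  ∀ s ∈ I, ∀ t ∈ I, dist (γ s) (γ t) = |s - t|

/-- A metric space is geodesic if any two points are joined by a geodesic. -/
def GeodesicSpace (X : Type*) [MetricSpace X] : Prop :=
  ∀ x y : X, ∃ γ : ℝ → X, γ 0 = x ∧ γ (dist x y) = y ∧ IsGeodesicOn γ (Icc 0 (dist x y))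

/-- A Morse gauge: an increasing map `ℝ≥1 × ℝ≥0 → ℝ≥0`, continuous in the second argument. -/
def IsMorseGauge (M : ℝ → ℝ → ℝ) : Prop :=
  (∀ l e, 1 ≤ l → 0 ≤ e → 0 ≤ M l e) ∧
  (∀ l l' e e', 1 ≤ l → 0 ≤ e → l ≤ l' → e ≤ e' → M l e ≤ M l' e') ∧
  (∀ l, 1 ≤ l → ContinuousOn (fun e => M l e) (Ici 0))

/-- Pointwise partial order on Morse gauges (on the domain `ℝ≥1 × ℝ≥0`). -/
def GaugeLE (M N : ℝ → ℝ → ℝ) : Prop :=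
  ∀ l e, 1 ≤ l → 0 ≤ e → M l e ≤ N l e

/-- `γ` restricted to `I` is `M`-Morse: every continuous `(lam, eps)`-quasi-geodesic with
endpoints on `γ` lies in the closed `M lam eps`-neighbourhood of `γ`. -/
def IsMorseWith {X : Type*} [MetricSpace X] (M : ℝ → ℝ → ℝ) (γ : ℝ → X) (I : Set ℝ) : Prop :=
  ∀ lam eps : ℝ, 1 ≤ lam → 0 ≤ eps →
    ∀ (η : ℝ → X) (a b : ℝ), a ≤ b →
      ContinuousOn η (Icc a b) → IsQuasiGeodesicOn η (Icc a b) lam eps →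
      η a ∈ γ '' I → η b ∈ γ '' I →
      ∀ t ∈ Icc a b, ∃ s ∈ I, dist (η t) (γ s) ≤ M lam eps

/-- The constant `δ_M` associated to a Morse gauge `M`. -/
def morseDelta (M : ℝ → ℝ → ℝ) : ℝ :=
  max (4 * M 1 (2 * M 5 0) + 2 * M 5 0) (8 * M 3 0)

/-!
Let `η` be a quasi-geodesic with endpoints `γ j₁, γ j₂`, and suppose the Morse property of `γ`
only places `η t` near `γ s` with `s` beyond `c = max j₁ j₂`. Every point of `η` lies near
`γ (I ∩ Iic c)` or near `γ (I ∩ Ici c)`, so by connectedness `η` passes near both halves at some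
time before `t` and at some time after `t`. A point near both halves is near `γ c`, because `γ`
is a quasi-geodesic; and a quasi-geodesic that is near `γ c` at two times stays in a bounded
neighbourhood of `γ c` in between. Hence `η t` is near `γ c`, with `c ∈ J`. The case
`s < min j₁ j₂` is symmetric.
-/

variable {X : Type*} [MetricSpace X]

theorem IsPreconnected.exists_infDist_le_and_infDist_le {s A B : Set X} {m : ℝ}
    (hs : IsPreconnected s) (hcover : ∀ z ∈ s, infDist z A ≤ m ∨ infDist z B ≤ m)
    {x y : X} (hx : x ∈ s) (hxA : infDist x A ≤ m) (hy : y ∈ s) (hyB : infDist y B ≤ m) :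
    ∃ z ∈ s, infDist z A ≤ m ∧ infDist z B ≤ m :=
  isPreconnected_closed_iff.1 hs _ _ (isClosed_le (continuous_infDist_pt _) continuous_const)
    (isClosed_le (continuous_infDist_pt _) continuous_const) hcover ⟨x, hx, hxA⟩ ⟨y, hy, hyB⟩

theorem IsGeodesicOn.isQuasiGeodesicOn {γ : ℝ → X} {I : Set ℝ} {lam eps : ℝ}
    (hγ : IsGeodesicOn γ I) (hlam : 1 ≤ lam) (heps : 0 ≤ eps) :
    IsQuasiGeodesicOn γ I lam eps := by
  intro s hs t ht
  rw [hγ s hs t ht]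
  have h : 1 / lam * |s - t| ≤ |s - t| :=
    mul_le_of_le_one_left (abs_nonneg _) ((div_le_one (by linarith)).2 hlam)
  constructor <;> nlinarith [abs_nonneg (s - t)]

namespace IsQuasiGeodesicOn

variable {γ : ℝ → X} {I : Set ℝ} {lam eps : ℝ}

theorem abs_sub_le (hγ : IsQuasiGeodesicOn γ I lam eps) (hlam : 0 < lam) {s t : ℝ}
    (hs : s ∈ I) (ht : t ∈ I) : |s - t| ≤ lam * (dist (γ s) (γ t) + eps) := by
  have h := (hγ s hs t ht).1
  rw [one_div] at h
  replace h : lam⁻¹ * |s - t| ≤ dist (γ s) (γ t) + eps := by linarith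
  rwa [inv_mul_le_iff₀ hlam] at h

theorem dist_le_of_between (hγ : IsQuasiGeodesicOn γ I lam eps) (hlam : 0 < lam)
    {u₁ t u₂ R : ℝ} {y : X} (hu₁ : u₁ ∈ I) (ht : t ∈ I) (hu₂ : u₂ ∈ I)
    (h₁ : u₁ ≤ t) (h₂ : t ≤ u₂) (hd₁ : dist (γ u₁) y ≤ R) (hd₂ : dist (γ u₂) y ≤ R) :
    dist (γ t) y ≤ lam ^ 2 * (2 * R + eps) + eps + R := by
  have hu : |u₂ - u₁| ≤ lam * (2 * R + eps) := by
    calc |u₂ - u₁| ≤ lam * (dist (γ u₂) (γ u₁) + eps) := hγ.abs_sub_le hlam hu₂ hu₁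
      _ ≤ lam * (2 * R + eps) := by
        gcongr
        linarith [dist_triangle_right (γ u₂) (γ u₁) y]
  have ht₁ : |t - u₁| ≤ |u₂ - u₁| := by
    rw [abs_of_nonneg (by linarith), abs_of_nonneg (by linarith)]
    linarith
  calc dist (γ t) y ≤ dist (γ t) (γ u₁) + dist (γ u₁) y := dist_triangle _ _ _
    _ ≤ (lam * |t - u₁| + eps) + R := add_le_add (hγ t ht u₁ hu₁).2 hd₁
    _ ≤ lam * (lam * (2 * R + eps)) + eps + R := by gcongr; exact ht₁.trans hu
    _ = lam ^ 2 * (2 * R + eps) + eps + R := by ring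

/-- If a continuous quasi-geodesic starts and ends near `A`, every point of it which is near `B`
lies between two points near both `A` and `B`. -/
theorem dist_le_of_excursion {a b t m R : ℝ} {A B : Set X} {y : X}
    (hγ : IsQuasiGeodesicOn γ (Icc a b) lam eps) (hlam : 0 < lam)
    (hcont : ContinuousOn γ (Icc a b))
    (hcover : ∀ u ∈ Icc a b, infDist (γ u) A ≤ m ∨ infDist (γ u) B ≤ m)
    (ha : infDist (γ a) A ≤ m) (hb : infDist (γ b) A ≤ m)
    (ht : t ∈ Icc a b) (htB : infDist (γ t) B ≤ m)
    (hAB : ∀ x, infDist x A ≤ m → infDist x B ≤ m → dist x y ≤ R) :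
    dist (γ t) y ≤ lam ^ 2 * (2 * R + eps) + eps + R := by
  have hsub₁ : Icc a t ⊆ Icc a b := Icc_subset_Icc le_rfl ht.2
  have hsub₂ : Icc t b ⊆ Icc a b := Icc_subset_Icc ht.1 le_rfl
  have hconn : ∀ {p q}, Icc p q ⊆ Icc a b → IsPreconnected (γ '' Icc p q) := fun h =>
    isPreconnected_Icc.image _ (hcont.mono h)
  have hcover' : ∀ {p q}, Icc p q ⊆ Icc a b →
      ∀ z ∈ γ '' Icc p q, infDist z A ≤ m ∨ infDist z B ≤ m := by
    rintro p q h _ ⟨u, hu, rfl⟩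
    exact hcover u (h hu)
  obtain ⟨_, ⟨u₁, hu₁, rfl⟩, hu₁A, hu₁B⟩ :=
    (hconn hsub₁).exists_infDist_le_and_infDist_le (hcover' hsub₁)
      (mem_image_of_mem γ (left_mem_Icc.2 ht.1)) ha
      (mem_image_of_mem γ (right_mem_Icc.2 ht.1)) htB
  obtain ⟨_, ⟨u₂, hu₂, rfl⟩, hu₂A, hu₂B⟩ :=
    (hconn hsub₂).exists_infDist_le_and_infDist_le (hcover' hsub₂)
      (mem_image_of_mem γ (right_mem_Icc.2 ht.2)) hb
      (mem_image_of_mem γ (left_mem_Icc.2 ht.2)) htB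
  exact hγ.dist_le_of_between hlam (hsub₁ hu₁) ht (hsub₂ hu₂) hu₁.2 hu₂.1
    (hAB _ hu₁A hu₁B) (hAB _ hu₂A hu₂B)

end IsQuasiGeodesicOn

/-- `m + 1` bounds the distance to some point of each half of `γ` (the `1` is slack for
`infDist`); the rest bounds the distance from the point `γ q` of the upper half to `γ c`. -/
def crossingRadius (C m : ℝ) : ℝ :=
  m + 1 + (C * (C * (2 * (m + 1) + C)) + C)

/-- The nearby points `γ p`, `γ q` with `p ≤ c ≤ q` are close, hence so are `p` and `q`, hence
so are `γ q` and `γ c`. -/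
theorem IsQuasiGeodesicOn.dist_le_crossingRadius {γ : ℝ → X} {I : Set ℝ} {C c m : ℝ} {x : X}
    (hγ : IsQuasiGeodesicOn γ I C C) (hC : 0 < C) (hc : c ∈ I)
    (hlo : infDist x (γ '' (I ∩ Iic c)) ≤ m) (hhi : infDist x (γ '' (I ∩ Ici c)) ≤ m) :
    dist x (γ c) ≤ crossingRadius C m := by
  obtain ⟨_, ⟨p, ⟨hp, hpc : p ≤ c⟩, rfl⟩, hxp⟩ :=
    (infDist_lt_iff (s := γ '' (I ∩ Iic c)) ⟨γ c, c, ⟨hc, mem_Iic.2 le_rfl⟩, rfl⟩).1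
      (hlo.trans_lt (lt_add_one m))
  obtain ⟨_, ⟨q, ⟨hq, hcq : c ≤ q⟩, rfl⟩, hxq⟩ :=
    (infDist_lt_iff (s := γ '' (I ∩ Ici c)) ⟨γ c, c, ⟨hc, mem_Ici.2 le_rfl⟩, rfl⟩).1
      (hhi.trans_lt (lt_add_one m))
  have hpq : q - c ≤ C * (2 * (m + 1) + C) := by
    calc q - c ≤ |q - p| := by rw [abs_of_nonneg (by linarith)]; linarith
      _ ≤ C * (dist (γ q) (γ p) + C) := hγ.abs_sub_le hC hq hp
      _ ≤ C * (2 * (m + 1) + C) := by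
        gcongr
        linarith [dist_triangle_left (γ q) (γ p) x]
  have hqc : dist (γ q) (γ c) ≤ C * (C * (2 * (m + 1) + C)) + C := by
    calc dist (γ q) (γ c) ≤ C * |q - c| + C := (hγ q hq c hc).2
      _ ≤ C * (C * (2 * (m + 1) + C)) + C := by
        rw [abs_of_nonneg (by linarith)]
        gcongr
  unfold crossingRadius
  linarith [dist_triangle x (γ q) (γ c)]

def subsegmentGauge (M : ℝ → ℝ → ℝ) (C lam eps : ℝ) : ℝ :=
  lam ^ 2 * (2 * crossingRadius C (M lam eps) + eps) + eps + crossingRadius C (M lam eps)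

theorem crossingRadius_le_crossingRadius {C C' m m' : ℝ} (hC : 0 ≤ C) (hm : 0 ≤ m)
    (hCC' : C ≤ C') (hmm' : m ≤ m') : crossingRadius C m ≤ crossingRadius C' m' := by
  have : 0 ≤ C' := hC.trans hCC'
  unfold crossingRadius
  gcongr

theorem le_crossingRadius {C m : ℝ} (hC : 0 ≤ C) (hm : 0 ≤ m) : m ≤ crossingRadius C m := by
  unfold crossingRadius
  have : 0 ≤ C * (C * (2 * (m + 1) + C)) := by positivity
  linarith

theorem le_subsegmentGauge {M : ℝ → ℝ → ℝ} {C lam eps : ℝ} (hC : 0 ≤ C) (hm : 0 ≤ M lam eps)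
    (heps : 0 ≤ eps) : M lam eps ≤ subsegmentGauge M C lam eps := by
  have h := le_crossingRadius hC hm
  unfold subsegmentGauge
  have : 0 ≤ lam ^ 2 * (2 * crossingRadius C (M lam eps) + eps) :=
    mul_nonneg (sq_nonneg lam) (by linarith)
  linarith

theorem subsegmentGauge_le_subsegmentGauge {M M' : ℝ → ℝ → ℝ} {C C' l l' e e' : ℝ}
    (hC : 0 ≤ C) (hm : 0 ≤ M l e) (hl : 0 ≤ l) (he : 0 ≤ e)
    (hCC' : C ≤ C') (hMM' : M l e ≤ M' l' e') (hll' : l ≤ l') (hee' : e ≤ e') :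
    subsegmentGauge M C l e ≤ subsegmentGauge M' C' l' e' := by
  have hR := crossingRadius_le_crossingRadius hC hm hCC' hMM'
  have hR0 := (le_crossingRadius hC hm).trans' hm
  unfold subsegmentGauge
  gcongr

theorem IsMorseGauge.subsegmentGauge {M : ℝ → ℝ → ℝ} {C : ℝ} (hM : IsMorseGauge M)
    (hC : 0 ≤ C) : IsMorseGauge (subsegmentGauge M C) := by
  obtain ⟨hM₀, hMmono, hMcont⟩ := hM
  refine ⟨fun l e hl he => (hM₀ l e hl he).trans (le_subsegmentGauge hC (hM₀ l e hl he) he),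
    fun l l' e e' hl he hll' hee' => subsegmentGauge_le_subsegmentGauge hC (hM₀ l e hl he)
      (by linarith) he le_rfl (hMmono l l' e e' hl he hll' hee') hll' hee',
    fun l hl => ?_⟩
  have := hMcont l hl
  unfold _root_.subsegmentGauge crossingRadius
  fun_prop

theorem IsMorseWith.subsegment {M : ℝ → ℝ → ℝ} {C : ℝ} {γ : ℝ → X} {I J : Set ℝ}
    (hγ : IsQuasiGeodesicOn γ I C C) (hC : 0 < C) (hM : IsMorseWith M γ I)
    (hJI : J ⊆ I) (hJ : J.OrdConnected) : IsMorseWith (subsegmentGauge M C) γ J := by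
  intro lam eps hlam heps η a b hab hcont hη ⟨j₁, hj₁, hηa⟩ ⟨j₂, hj₂, hηb⟩ t ht
  have hnear := hM lam eps hlam heps η a b hab hcont hη ⟨j₁, hJI hj₁, hηa⟩ ⟨j₂, hJI hj₂, hηb⟩
  obtain ⟨s, hs, hts⟩ := hnear t ht
  set m := M lam eps
  have hm : 0 ≤ m := dist_nonneg.trans hts
  have hlo : min j₁ j₂ ∈ J := by rcases min_choice j₁ j₂ with h | h <;> rw [h] <;> assumption
  have hhi : max j₁ j₂ ∈ J := by rcases max_choice j₁ j₂ with h | h <;> rw [h] <;> assumption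
  have hclose : ∀ {w : ℝ} {S : Set ℝ}, w ∈ I → w ∈ S → ∀ {x : X}, dist x (γ w) ≤ m →
      infDist x (γ '' (I ∩ S)) ≤ m := fun hwI hwS _ h =>
    (infDist_le_dist_of_mem (mem_image_of_mem γ (mem_inter hwI hwS))).trans h
  have hcover : ∀ c, ∀ u ∈ Icc a b,
      infDist (η u) (γ '' (I ∩ Iic c)) ≤ m ∨ infDist (η u) (γ '' (I ∩ Ici c)) ≤ m := by
    intro c u hu
    obtain ⟨w, hw, hd⟩ := hnear u hu
    rcases le_total w c with hwc | hcw
    · exact Or.inl (hclose hw (mem_Iic.2 hwc) hd)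
    · exact Or.inr (hclose hw (mem_Ici.2 hcw) hd)
  have hend : ∀ {S : Set ℝ}, j₁ ∈ S → j₂ ∈ S →
      infDist (η a) (γ '' (I ∩ S)) ≤ m ∧ infDist (η b) (γ '' (I ∩ S)) ≤ m := fun h₁ h₂ =>
    ⟨hclose (hJI hj₁) h₁ (by rw [← hηa, dist_self]; exact hm),
      hclose (hJI hj₂) h₂ (by rw [← hηb, dist_self]; exact hm)⟩
  have hlam0 : 0 < lam := by linarith
  rcases le_or_gt s (max j₁ j₂) with hs_hi | hs_hi
  · rcases le_or_gt (min j₁ j₂) s with hs_lo | hs_lo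
    · exact ⟨s, hJ.out hlo hhi ⟨hs_lo, hs_hi⟩, hts.trans (le_subsegmentGauge hC.le hm heps)⟩
    · refine ⟨min j₁ j₂, hlo, ?_⟩
      obtain ⟨ha, hb⟩ := hend (S := Ici (min j₁ j₂)) (mem_Ici.2 (min_le_left _ _))
        (mem_Ici.2 (min_le_right _ _))
      exact hη.dist_le_of_excursion hlam0 hcont (fun u hu => (hcover _ u hu).symm) ha hb ht
        (hclose hs (mem_Iic.2 hs_lo.le) hts)
        (fun x hx hx' => hγ.dist_le_crossingRadius hC (hJI hlo) hx' hx)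
  · refine ⟨max j₁ j₂, hhi, ?_⟩
    obtain ⟨ha, hb⟩ := hend (S := Iic (max j₁ j₂)) (mem_Iic.2 (le_max_left _ _))
      (mem_Iic.2 (le_max_right _ _))
    exact hη.dist_le_of_excursion hlam0 hcont (hcover _) ha hb ht
      (hclose hs (mem_Ici.2 hs_hi.le) hts)
      (fun x hx hx' => hγ.dist_le_crossingRadius hC (hJI hhi) hx hx')

/-- There is an increasing function `f₂ : 𝓜 × ℝ≥1 → 𝓜` such that, in any
geodesic metric space, the restriction of an `M`-Morse geodesic to a subinterval is
`f₂ M C`-Morse, and more generally any subsegment of an `M`-Morse `C`-quasi-geodesic is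
`f₂ M C`-Morse. -/
theorem statement2 : ∃ f₂ : (ℝ → ℝ → ℝ) → ℝ → (ℝ → ℝ → ℝ),
    (∀ M C, IsMorseGauge M → 1 ≤ C → IsMorseGauge (f₂ M C)) ∧
    (∀ M M' C C', IsMorseGauge M → IsMorseGauge M' → 1 ≤ C →
      GaugeLE M M' → C ≤ C' → GaugeLE (f₂ M C) (f₂ M' C')) ∧
    (∀ (X : Type u) [inst : MetricSpace X], GeodesicSpace X →
      ∀ (M : ℝ → ℝ → ℝ) (C : ℝ) (γ : ℝ → X) (I J : Set ℝ),
        IsMorseGauge M → 1 ≤ C →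
        IsGeodesicOn γ I → IsMorseWith M γ I →
        J ⊆ I → J.OrdConnected →
        IsMorseWith (f₂ M C) γ J) ∧
    (∀ (X : Type u) [inst : MetricSpace X], GeodesicSpace X →
      ∀ (M : ℝ → ℝ → ℝ) (C : ℝ) (γ : ℝ → X) (I J : Set ℝ),
        IsMorseGauge M → 1 ≤ C →
        IsQuasiGeodesicOn γ I C C → IsMorseWith M γ I →
        J ⊆ I → J.OrdConnected →
        IsMorseWith (f₂ M C) γ J) := by
  refine ⟨subsegmentGauge, fun M C hM hC => hM.subsegmentGauge (by linarith), ?_, ?_, ?_⟩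
  · intro M M' C C' hM _ hC hMM' hCC' l e hl he
    exact subsegmentGauge_le_subsegmentGauge (by linarith) (hM.1 l e hl he) (by linarith) he
      hCC' (hMM' l e hl he) le_rfl le_rfl
  · intro X _ _ M C γ I J _ hC hγ hM hJI hJ
    exact hM.subsegment (hγ.isQuasiGeodesicOn hC (by linarith)) (by linarith) hJI hJ
  · intro X _ _ M C γ I J _ hC hγ hM hJI hJ
    exact hM.subsegment hγ (by linarith) hJI hJ
end

section
/- There exists an increasing function f₁ : MorseGauges → MorseGauges such that in any geodesic metric space, if γ₁ and γ₂ are M-Morse quasi-geodesics with γ₁⁺ = γ₂⁻ (the endpoint of γ₁ equals the starting point of γ₂) and the concatenation γ = γ₁ · γ₂ is a quasi-geodesic, then γ is f₁(M)-Morse. -/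
/-!
Let `η` be a `(λ, ε)`-quasi-geodesic from `γ₁` to `γ₂`, and let `η t₀` be a point of `η`
nearest to the junction point `y = γ₁⁺ = γ₂⁻`. Following `η` up to `t₀` and then a geodesic
from `η t₀` to `y` gives a `(3λ, 3ε)`-quasi-geodesic with endpoints on `γ₁`: the nearest-point
property keeps the geodesic from backtracking towards the earlier part of `η`. So the first part
of `η` is `M (3λ) (3ε)`-close to `γ₁`, and, reversing `η`, the second part is close to `γ₂`.
Hence `f₁ M λ ε = M (3λ) (3ε)` works.
-/

open Set Metric

universe u

section QuasiGeodesics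

variable {X : Type*} [MetricSpace X]

lemma IsQuasiGeodesicOn.mono {η : ℝ → X} {I J : Set ℝ} {lam eps : ℝ}
    (h : IsQuasiGeodesicOn η I lam eps) (hJI : J ⊆ I) : IsQuasiGeodesicOn η J lam eps :=
  fun s hs t ht => h s (hJI hs) t (hJI ht)

lemma IsQuasiGeodesicOn.mono_const {η : ℝ → X} {I : Set ℝ} {lam eps lam' eps' : ℝ}
    (h : IsQuasiGeodesicOn η I lam eps) (hlam : 0 < lam) (hlam' : lam ≤ lam')
    (heps' : eps ≤ eps') : IsQuasiGeodesicOn η I lam' eps' := by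
  intro s hs t ht
  obtain ⟨hlow, hup⟩ := h s hs t ht
  have hinv : 1 / lam' * |s - t| ≤ 1 / lam * |s - t| := by gcongr
  have hmul : lam * |s - t| ≤ lam' * |s - t| := by gcongr
  exact ⟨by linarith, by linarith⟩

lemma IsQuasiGeodesicOn.of_le {η : ℝ → X} {I : Set ℝ} {lam eps : ℝ}
    (h : ∀ s ∈ I, ∀ t ∈ I, s ≤ t → 1 / lam * |s - t| - eps ≤ dist (η s) (η t) ∧
      dist (η s) (η t) ≤ lam * |s - t| + eps) :
    IsQuasiGeodesicOn η I lam eps := by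
  intro s hs t ht
  rcases le_total s t with hst | hts
  · exact h s hs t ht hst
  · rw [abs_sub_comm, dist_comm]
    exact h t ht s hs hts

lemma reflect_mem_Icc {p q t : ℝ} (ht : t ∈ Icc p q) : p + q - t ∈ Icc p q :=
  ⟨by linarith [ht.2], by linarith [ht.1]⟩

lemma IsQuasiGeodesicOn.comp_reflect {η : ℝ → X} {p q lam eps : ℝ}
    (h : IsQuasiGeodesicOn η (Icc p q) lam eps) :
    IsQuasiGeodesicOn (fun t => η (p + q - t)) (Icc p q) lam eps := by
  intro s hs t ht
  rw [abs_sub_comm, ← sub_sub_sub_cancel_left s t (p + q)]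
  exact h _ (reflect_mem_Icc hs) _ (reflect_mem_Icc ht)

lemma ContinuousOn.comp_reflect {η : ℝ → X} {p q : ℝ} (h : ContinuousOn η (Icc p q)) :
    ContinuousOn (fun t => η (p + q - t)) (Icc p q) :=
  h.comp (by fun_prop) fun _ => reflect_mem_Icc

lemma IsGeodesicOn.isQuasiGeodesicOn_s3 {g : ℝ → X} {I : Set ℝ} (hg : IsGeodesicOn g I) :
    IsQuasiGeodesicOn g I 1 0 := by
  intro s hs t ht
  simp [hg s hs t ht]

lemma IsGeodesicOn.continuousOn {g : ℝ → X} {I : Set ℝ} (hg : IsGeodesicOn g I) :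
    ContinuousOn g I :=
  (LipschitzOnWith.mk_one fun s hs t ht => (hg s hs t ht).le).continuousOn

lemma IsGeodesicOn.comp_sub_const {g : ℝ → X} {L : ℝ} (hg : IsGeodesicOn g (Icc 0 L))
    (q : ℝ) : IsGeodesicOn (fun t => g (t - q)) (Icc q (q + L)) := by
  intro s hs t ht
  rw [← sub_sub_sub_cancel_right s t q]
  exact hg _ ⟨by linarith [hs.1], by linarith [hs.2]⟩ _
    ⟨by linarith [ht.1], by linarith [ht.2]⟩

lemma dist_bounds_of_nearest_of_between {x z w y : X} {a lam eps : ℝ} (hlam : 1 ≤ lam)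
    (heps : 0 ≤ eps) (ha : 0 ≤ a)
    (hxz : 1 / lam * a - eps ≤ dist x z ∧ dist x z ≤ lam * a + eps)
    (hbetween : dist z w + dist w y = dist z y) (hnear : dist z y ≤ dist x y) :
    1 / (3 * lam) * (a + dist z w) - 3 * eps ≤ dist x w ∧
      dist x w ≤ 3 * lam * (a + dist z w) + 3 * eps := by
  set u := dist z w
  have hu : 0 ≤ u := dist_nonneg
  -- `dist x w ≥ max u (dist x z - u)`; the average `(dist x z - u) / 3 + 2 u / 3` gives the
  -- lower bound.
  have hux : u ≤ dist x w := by linarith [dist_triangle x w y]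
  have hxzu : dist x z - u ≤ dist x w := by linarith [dist_triangle x w z, dist_comm w z]
  have hxwu : dist x w ≤ dist x z + u := dist_triangle x z w
  have hsplit : 1 / (3 * lam) * (a + u) = (1 / lam * a + 1 / lam * u) / 3 := by ring
  have hshrink : 1 / lam * u ≤ u := mul_le_of_le_one_left hu (by rw [div_le_one] <;> linarith)
  have hstretch : u ≤ lam * u := le_mul_of_one_le_left hu hlam
  have hla : 0 ≤ lam * a := by positivity
  constructor <;> linarith

lemma IsQuasiGeodesicOn.ite_geodesic_of_nearest {η g : ℝ → X} {p q r lam eps : ℝ}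
    (hlam : 1 ≤ lam) (heps : 0 ≤ eps) (hη : IsQuasiGeodesicOn η (Icc p q) lam eps)
    (hg : IsGeodesicOn g (Icc q r)) (hgq : g q = η q)
    (hnear : ∀ s ∈ Icc p q, dist (η q) (g r) ≤ dist (η s) (g r)) :
    IsQuasiGeodesicOn (fun t => if t < q then η t else g t) (Icc p r) (3 * lam) (3 * eps) := by
  have hη' := hη.mono_const (by linarith) (by linarith : lam ≤ 3 * lam)
    (by linarith : eps ≤ 3 * eps)
  have hg' := hg.isQuasiGeodesicOn_s3.mono_const one_pos (by linarith : 1 ≤ 3 * lam)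
    (by linarith : 0 ≤ 3 * eps)
  refine IsQuasiGeodesicOn.of_le fun s hs t ht hst => ?_
  rcases lt_or_ge t q with htq | hqt
  · simp only [if_pos htq, if_pos (hst.trans_lt htq)]
    exact hη' s ⟨hs.1, by linarith⟩ t ⟨ht.1, htq.le⟩
  rcases lt_or_ge s q with hsq | hqs
  · simp only [if_pos hsq, if_neg hqt.not_gt]
    have hqr : q ≤ r := hqt.trans ht.2
    have hxz := hη s ⟨hs.1, hsq.le⟩ q ⟨hs.1.trans hsq.le, le_rfl⟩
    have hzw : dist (g q) (g t) = t - q := by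
      rw [hg q ⟨le_rfl, hqr⟩ t ⟨hqt, ht.2⟩, abs_of_nonpos (by linarith)]
      ring
    have hbetween : dist (g q) (g t) + dist (g t) (g r) = dist (g q) (g r) := by
      rw [hg q ⟨le_rfl, hqr⟩ t ⟨hqt, ht.2⟩, hg t ⟨hqt, ht.2⟩ r ⟨hqr, le_rfl⟩,
        hg q ⟨le_rfl, hqr⟩ r ⟨hqr, le_rfl⟩, abs_of_nonpos (by linarith),
        abs_of_nonpos (by linarith [ht.2]), abs_of_nonpos (by linarith)]
      ring
    rw [abs_sub_comm s q, abs_of_nonneg (by linarith), ← hgq] at hxz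
    rw [← hgq] at hnear
    rw [abs_of_nonpos (by linarith : s - t ≤ 0),
      show -(s - t) = q - s + dist (g q) (g t) by rw [hzw]; ring]
    exact dist_bounds_of_nearest_of_between hlam heps (by linarith) hxz hbetween
      (hnear s ⟨hs.1, hsq.le⟩)
  · simp only [if_neg hqs.not_gt, if_neg hqt.not_gt]
    exact hg' s ⟨hqs, hs.2⟩ t ⟨hqt, ht.2⟩

lemma GeodesicSpace.exists_extension_to_nearest (hX : GeodesicSpace X) {η : ℝ → X}
    {p q lam eps : ℝ} {y : X} (hlam : 1 ≤ lam) (heps : 0 ≤ eps) (hpq : p ≤ q)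
    (hcont : ContinuousOn η (Icc p q)) (hη : IsQuasiGeodesicOn η (Icc p q) lam eps)
    (hnear : ∀ s ∈ Icc p q, dist (η q) y ≤ dist (η s) y) :
    ∃ r, q ≤ r ∧ ∃ ζ : ℝ → X, ContinuousOn ζ (Icc p r) ∧
      IsQuasiGeodesicOn ζ (Icc p r) (3 * lam) (3 * eps) ∧ EqOn ζ η (Icc p q) ∧ ζ r = y := by
  obtain ⟨g, hg0, hgy, hg⟩ := hX (η q) y
  set L := dist (η q) y
  have hL : 0 ≤ L := dist_nonneg
  have hg' := hg.comp_sub_const q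
  have hg'q : g (q - q) = η q := by rw [sub_self, hg0]
  have hg'y : g (q + L - q) = y := by rw [add_sub_cancel_left, hgy]
  set ζ : ℝ → X := fun t => if t < q then η t else g (t - q)
  have hζη : EqOn ζ η (Icc p q) := by
    intro t ht
    rcases ht.2.lt_or_eq with htq | rfl
    · exact if_pos htq
    · exact (if_neg (lt_irrefl t)).trans hg'q
  have hζg : EqOn ζ (fun t => g (t - q)) (Icc q (q + L)) := fun t ht => if_neg ht.1.not_gt
  refine ⟨q + L, by linarith, ζ, ?_, ?_, hζη, (hζg ⟨by linarith, le_rfl⟩).trans hg'y⟩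
  · rw [← Icc_union_Icc_eq_Icc hpq (by linarith : q ≤ q + L)]
    exact (hcont.congr hζη).union_of_isClosed (hg'.continuousOn.congr hζg) isClosed_Icc
      isClosed_Icc
  · exact hη.ite_geodesic_of_nearest hlam heps hg' hg'q (by rwa [hg'y])

end QuasiGeodesics

def tripledGauge (M : ℝ → ℝ → ℝ) : ℝ → ℝ → ℝ := fun l e => M (3 * l) (3 * e)

lemma IsMorseGauge.tripled {M : ℝ → ℝ → ℝ} (hM : IsMorseGauge M) :
    IsMorseGauge (tripledGauge M) := by
  obtain ⟨hnonneg, hmono, hcont⟩ := hM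
  refine ⟨fun l e hl he => hnonneg _ _ (by linarith) (by linarith),
    fun l l' e e' hl he hll' hee' => hmono _ _ _ _ (by linarith) (by linarith) (by linarith)
      (by linarith), fun l hl => ?_⟩
  exact (hcont (3 * l) (by linarith)).comp (by fun_prop) fun e he => by
    simp only [mem_Ici] at he ⊢; linarith

lemma GaugeLE.tripled {M N : ℝ → ℝ → ℝ} (h : GaugeLE M N) :
    GaugeLE (tripledGauge M) (tripledGauge N) :=
  fun l e hl he => h _ _ (by linarith) (by linarith)

lemma IsMorseGauge.le_tripled {M : ℝ → ℝ → ℝ} (hM : IsMorseGauge M) :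
    GaugeLE M (tripledGauge M) :=
  fun _ _ hl he => hM.2.1 _ _ _ _ hl he (by linarith) (by linarith)

section Morse

variable {X : Type*} [MetricSpace X] {M : ℝ → ℝ → ℝ} {γ η : ℝ → X} {I J : Set ℝ} {y : X}
  {p q lam eps : ℝ}

lemma IsMorseWith.exists_dist_le_of_nearest (hX : GeodesicSpace X)
    (hI : IsMorseWith M γ I) (hy : y ∈ γ '' I) (hlam : 1 ≤ lam) (heps : 0 ≤ eps) (hpq : p ≤ q)
    (hcont : ContinuousOn η (Icc p q)) (hη : IsQuasiGeodesicOn η (Icc p q) lam eps)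
    (hp : η p ∈ γ '' I) (hnear : ∀ s ∈ Icc p q, dist (η q) y ≤ dist (η s) y) :
    ∀ t ∈ Icc p q, ∃ s ∈ I, dist (η t) (γ s) ≤ tripledGauge M lam eps := by
  obtain ⟨r, hqr, ζ, hζcont, hζ, hζη, hζr⟩ :=
    hX.exists_extension_to_nearest hlam heps hpq hcont hη hnear
  intro t ht
  rw [← hζη ht]
  refine hI _ _ (by linarith) (by linarith) ζ p r (hpq.trans hqr) hζcont hζ ?_ (hζr ▸ hy) t
    ⟨ht.1, ht.2.trans hqr⟩
  rwa [hζη ⟨le_rfl, hpq⟩]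

lemma IsMorseWith.exists_dist_le_of_crossing (hX : GeodesicSpace X)
    (hI : IsMorseWith M γ I) (hJ : IsMorseWith M γ J) (hyI : y ∈ γ '' I) (hyJ : y ∈ γ '' J)
    (hlam : 1 ≤ lam) (heps : 0 ≤ eps) (hpq : p ≤ q) (hcont : ContinuousOn η (Icc p q))
    (hη : IsQuasiGeodesicOn η (Icc p q) lam eps) (hp : η p ∈ γ '' I) (hq : η q ∈ γ '' J) :
    ∀ t ∈ Icc p q, ∃ s ∈ I ∪ J, dist (η t) (γ s) ≤ tripledGauge M lam eps := by
  obtain ⟨t₀, ht₀, hmin⟩ := isCompact_Icc.exists_isMinOn (nonempty_Icc.2 hpq)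
    (continuous_dist.comp_continuousOn (hcont.prodMk continuousOn_const))
  have hnear : ∀ s ∈ Icc p q, dist (η t₀) y ≤ dist (η s) y := isMinOn_iff.1 hmin
  intro t ht
  rcases le_total t t₀ with htt₀ | ht₀t
  · have hsub : Icc p t₀ ⊆ Icc p q := Icc_subset_Icc_right ht₀.2
    obtain ⟨s, hs, hdist⟩ := hI.exists_dist_le_of_nearest hX hyI hlam heps ht₀.1
      (hcont.mono hsub) (hη.mono hsub) hp (fun s hs => hnear s (hsub hs)) t ⟨ht.1, htt₀⟩
    exact ⟨s, Or.inl hs, hdist⟩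
  · have hsub : Icc t₀ q ⊆ Icc p q := Icc_subset_Icc_left ht₀.1
    obtain ⟨s, hs, hdist⟩ := hJ.exists_dist_le_of_nearest hX hyJ hlam heps ht₀.2
      (hcont.mono hsub).comp_reflect (hη.mono hsub).comp_reflect (by simpa using hq)
      (fun s hs => by simpa using hnear _ (hsub (reflect_mem_Icc hs))) (t₀ + q - t)
      (reflect_mem_Icc ⟨ht₀t, ht.2⟩)
    exact ⟨s, Or.inr hs, by simpa using hdist⟩

theorem IsMorseWith.union (hX : GeodesicSpace X) (hM : IsMorseGauge M)
    (hI : IsMorseWith M γ I) (hJ : IsMorseWith M γ J) (hIJ : (γ '' I ∩ γ '' J).Nonempty) :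
    IsMorseWith (tripledGauge M) γ (I ∪ J) := by
  obtain ⟨y, hyI, hyJ⟩ := hIJ
  intro lam eps hlam heps η p q hpq hcont hη hp hq t ht
  have hle := hM.le_tripled lam eps hlam heps
  rw [image_union] at hp hq
  rcases hp with hp | hp <;> rcases hq with hq | hq
  · obtain ⟨s, hs, hdist⟩ := hI lam eps hlam heps η p q hpq hcont hη hp hq t ht
    exact ⟨s, Or.inl hs, hdist.trans hle⟩
  · exact hI.exists_dist_le_of_crossing hX hJ hyI hyJ hlam heps hpq hcont hη hp hq t ht
  · rw [union_comm]
    exact hJ.exists_dist_le_of_crossing hX hI hyJ hyI hlam heps hpq hcont hη hp hq t ht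
  · obtain ⟨s, hs, hdist⟩ := hJ lam eps hlam heps η p q hpq hcont hη hp hq t ht
    exact ⟨s, Or.inr hs, hdist.trans hle⟩

end Morse

/-- The concatenation is encoded as a single map `γ` on `[a, c]` whose restrictions to
`[a, b]` and `[b, c]` are the given `M`-Morse quasi-geodesics. -/
theorem statement3 : ∃ f₁ : (ℝ → ℝ → ℝ) → (ℝ → ℝ → ℝ),
    (∀ M, IsMorseGauge M → IsMorseGauge (f₁ M)) ∧
    (∀ M N, IsMorseGauge M → IsMorseGauge N → GaugeLE M N → GaugeLE (f₁ M) (f₁ N)) ∧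
    ∀ (X : Type u) [inst : MetricSpace X], GeodesicSpace X →
      ∀ (M : ℝ → ℝ → ℝ), IsMorseGauge M →
      ∀ (γ : ℝ → X) (a b c lam₁ eps₁ lam₂ eps₂ lam eps : ℝ),
        a ≤ b → b ≤ c →
        1 ≤ lam₁ → 0 ≤ eps₁ → 1 ≤ lam₂ → 0 ≤ eps₂ → 1 ≤ lam → 0 ≤ eps →
        IsQuasiGeodesicOn γ (Icc a b) lam₁ eps₁ → IsMorseWith M γ (Icc a b) →
        IsQuasiGeodesicOn γ (Icc b c) lam₂ eps₂ → IsMorseWith M γ (Icc b c) →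
        IsQuasiGeodesicOn γ (Icc a c) lam eps →
        IsMorseWith (f₁ M) γ (Icc a c) := by
  refine ⟨tripledGauge, fun _ hM => hM.tripled, fun _ _ _ _ hMN => hMN.tripled, ?_⟩
  intro X _ hX M hM γ a b c _ _ _ _ _ _ hab hbc _ _ _ _ _ _ _ hMab _ hMbc _
  rw [← Icc_union_Icc_eq_Icc hab hbc]
  exact hMab.union hX hM hMbc ⟨γ b, ⟨b, ⟨hab, le_rfl⟩, rfl⟩, ⟨b, ⟨le_rfl, hbc⟩, rfl⟩⟩
end

section
/- Let X be a geodesic metric space and let γ₁, γ₂ be M-Morse geodesics in X starting at the same basepoint. Suppose there is a subset W ⊆ X and D ≥ 0 such that any geodesic with both endpoints in W and which is f₁²(M)-Morse has length at most D (where f₁ is the universal triangle/Morse function), and suppose γ₁(t₁), γ₂(t₂) ∈ W. Then d(γ₁(s), γ₂(s)) ≤ D₇(M, D) for all 0 ≤ s ≤ max{t₁, t₂}, where D₇ depends only on M and D. -/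
/-!
Join `γ₁ t₁` to `γ₂ t₂` by a geodesic `g`. Subsegments of the rays are `f₁ M`-Morse, so by the
triangle property `g` is `f₁ (f₁ M)`-Morse, and the hypothesis on `W` bounds its length by `D`.
Running out along `γ₂` and back along `g` is then a continuous `(1, 2D)`-quasi-geodesic with
endpoints on the Morse ray `γ₁`, so `γ₂ s` lies within `M 1 (2D)` of some `γ₁ w`; as both rays
start at the same point, `|w - s| ≤ M 1 (2D)`, whence `d(γ₁ s, γ₂ s) ≤ 2 M 1 (2D)`.
-/

open Set Metric

universe u

section Concatenation

variable {X : Type*}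

noncomputable def concatPath (δ g : ℝ → X) (a : ℝ) : ℝ → X :=
  fun u => if u ≤ a then δ u else g (u - a)

variable {δ g : ℝ → X} {a L : ℝ}

lemma concatPath_zero (ha : 0 ≤ a) : concatPath δ g a 0 = δ 0 :=
  if_pos ha

lemma concatPath_add (hga : g 0 = δ a) (hL : 0 ≤ L) : concatPath δ g a (a + L) = g L := by
  unfold concatPath
  split_ifs with h
  · obtain rfl : L = 0 := by linarith
    rw [add_zero, hga]
  · rw [add_sub_cancel_left]

variable [MetricSpace X]

lemma IsGeodesicOn.mono {γ : ℝ → X} {I J : Set ℝ} (h : IsGeodesicOn γ I) (hJ : J ⊆ I) :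
    IsGeodesicOn γ J :=
  fun s hs t ht => h s (hJ hs) t (hJ ht)

lemma IsGeodesicOn.dist_eq_sub {γ : ℝ → X} {I : Set ℝ} (h : IsGeodesicOn γ I) {u v : ℝ}
    (hu : u ∈ I) (hv : v ∈ I) (huv : u ≤ v) : dist (γ u) (γ v) = v - u := by
  rw [h u hu v hv, abs_sub_comm, abs_of_nonneg (sub_nonneg.2 huv)]

lemma concatPath_dist_bounds (hδ : IsGeodesicOn δ (Icc 0 a)) (hg : IsGeodesicOn g (Icc 0 L))
    (hga : g 0 = δ a) (hL : 0 ≤ L) {u v : ℝ} (hu : 0 ≤ u) (huv : u ≤ v) (hv : v ≤ a + L) :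
    dist (concatPath δ g a u) (concatPath δ g a v) ≤ v - u ∧
      v - u - 2 * L ≤ dist (concatPath δ g a u) (concatPath δ g a v) := by
  unfold concatPath
  by_cases hva : v ≤ a
  · rw [if_pos (huv.trans hva), if_pos hva,
      hδ.dist_eq_sub ⟨hu, huv.trans hva⟩ ⟨hu.trans huv, hva⟩ huv]
    constructor <;> linarith
  by_cases hua : u ≤ a
  · rw [if_pos hua, if_neg hva]
    have hδu : dist (δ u) (δ a) = a - u := hδ.dist_eq_sub ⟨hu, hua⟩ ⟨hu.trans hua, le_rfl⟩ hua
    have hgv : dist (δ a) (g (v - a)) = v - a := by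
      rw [← hga, hg.dist_eq_sub ⟨le_rfl, by linarith⟩ ⟨by linarith, by linarith⟩ (by linarith)]
      ring
    constructor
    · linarith [dist_triangle (δ u) (δ a) (g (v - a))]
    · linarith [dist_triangle_right (δ u) (δ a) (g (v - a))]
  · rw [if_neg hua, if_neg hva,
      hg.dist_eq_sub ⟨by linarith, by linarith⟩ ⟨by linarith, by linarith⟩ (by linarith)]
    constructor <;> linarith

lemma concatPath_dist_bounds_abs (hδ : IsGeodesicOn δ (Icc 0 a)) (hg : IsGeodesicOn g (Icc 0 L))
    (hga : g 0 = δ a) (hL : 0 ≤ L) {u v : ℝ} (hu : u ∈ Icc 0 (a + L)) (hv : v ∈ Icc 0 (a + L)) :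
    dist (concatPath δ g a u) (concatPath δ g a v) ≤ |u - v| ∧
      |u - v| - 2 * L ≤ dist (concatPath δ g a u) (concatPath δ g a v) := by
  rcases le_total u v with huv | hvu
  · rw [abs_sub_comm, abs_of_nonneg (sub_nonneg.2 huv)]
    exact concatPath_dist_bounds hδ hg hga hL hu.1 huv hv.2
  · rw [abs_of_nonneg (sub_nonneg.2 hvu), dist_comm]
    exact concatPath_dist_bounds hδ hg hga hL hv.1 hvu hu.2

lemma isQuasiGeodesicOn_concatPath (hδ : IsGeodesicOn δ (Icc 0 a)) (hg : IsGeodesicOn g (Icc 0 L))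
    (hga : g 0 = δ a) (hL : 0 ≤ L) {E : ℝ} (hE : 2 * L ≤ E) :
    IsQuasiGeodesicOn (concatPath δ g a) (Icc 0 (a + L)) 1 E := by
  intro u hu v hv
  obtain ⟨hle, hge⟩ := concatPath_dist_bounds_abs hδ hg hga hL hu hv
  constructor <;> linarith [abs_nonneg (u - v)]

lemma continuousOn_concatPath (hδ : IsGeodesicOn δ (Icc 0 a)) (hg : IsGeodesicOn g (Icc 0 L))
    (hga : g 0 = δ a) (hL : 0 ≤ L) : ContinuousOn (concatPath δ g a) (Icc 0 (a + L)) := by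
  refine (LipschitzOnWith.of_dist_le_mul (K := 1) fun u hu v hv => ?_).continuousOn
  rw [NNReal.coe_one, one_mul, Real.dist_eq]
  exact (concatPath_dist_bounds_abs hδ hg hga hL hu hv).1

end Concatenation

section Rays

variable {X : Type*} [MetricSpace X] {δ₁ δ₂ : ℝ → X}

lemma dist_apply_le_two_mul_of_dist_le (hδ₁ : IsGeodesicOn δ₁ (Ici 0))
    (hδ₂ : IsGeodesicOn δ₂ (Ici 0)) (h0 : δ₁ 0 = δ₂ 0) {s w C : ℝ} (hs : 0 ≤ s) (hw : 0 ≤ w)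
    (h : dist (δ₁ w) (δ₂ s) ≤ C) : dist (δ₁ s) (δ₂ s) ≤ 2 * C := by
  have hws : |w - s| ≤ C := by
    have := abs_dist_sub_le (δ₁ w) (δ₂ s) (δ₂ 0)
    rw [← h0, hδ₁ w hw 0 self_mem_Ici, h0, hδ₂ s hs 0 self_mem_Ici, sub_zero, sub_zero,
      abs_of_nonneg hw, abs_of_nonneg hs] at this
    linarith
  calc dist (δ₁ s) (δ₂ s) ≤ dist (δ₁ s) (δ₁ w) + dist (δ₁ w) (δ₂ s) := dist_triangle _ _ _
    _ = |w - s| + dist (δ₁ w) (δ₂ s) := by rw [hδ₁ s hs w hw, abs_sub_comm]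
    _ ≤ 2 * C := by linarith

lemma dist_apply_le_of_isMorseWith_of_dist_le {M : ℝ → ℝ → ℝ} (hX : GeodesicSpace X)
    (hδ₁ : IsGeodesicOn δ₁ (Ici 0)) (hM : IsMorseWith M δ₁ (Ici 0))
    (hδ₂ : IsGeodesicOn δ₂ (Ici 0)) (h0 : δ₁ 0 = δ₂ 0) {u₁ u₂ E : ℝ} (hu₁ : 0 ≤ u₁)
    (hu₂ : 0 ≤ u₂) (hE : 2 * dist (δ₂ u₂) (δ₁ u₁) ≤ E) {s : ℝ} (hs : 0 ≤ s) (hsu : s ≤ u₂) :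
    dist (δ₁ s) (δ₂ s) ≤ 2 * M 1 E := by
  obtain ⟨g, hg0, hgL, hg⟩ := hX (δ₂ u₂) (δ₁ u₁)
  set L := dist (δ₂ u₂) (δ₁ u₁)
  have hL : 0 ≤ L := dist_nonneg
  have hδ₂' : IsGeodesicOn δ₂ (Icc 0 u₂) := hδ₂.mono Icc_subset_Ici_self
  obtain ⟨w, hw, hdist⟩ := hM 1 E le_rfl (by linarith) (concatPath δ₂ g u₂) 0 (u₂ + L)
    (by linarith) (continuousOn_concatPath hδ₂' hg hg0 hL)
    (isQuasiGeodesicOn_concatPath hδ₂' hg hg0 hL hE)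
    ⟨0, self_mem_Ici, by rw [concatPath_zero hu₂, h0]⟩
    ⟨u₁, hu₁, by rw [concatPath_add hg0 hL, hgL]⟩ s ⟨hs, by linarith⟩
  rw [concatPath, if_pos hsu, dist_comm] at hdist
  exact dist_apply_le_two_mul_of_dist_le hδ₁ hδ₂ h0 hs hw hdist

end Rays

/-- abstract join lemma, cf. Lemma 3.25: Given the universal function `f₁`
(controlling triangles and subsegments of Morse geodesics), there is
`D₇ : 𝓜 × ℝ → ℝ` such that: if `γ₁, γ₂` are `M`-Morse geodesic rays from the same
basepoint, `W ⊆ X` is such that every `f₁² M`-Morse geodesic with both endpoints in `W` has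
length at most `D`, and `γ₁ t₁, γ₂ t₂ ∈ W`, then `d(γ₁ s, γ₂ s) ≤ D₇ M D` for all
`0 ≤ s ≤ max t₁ t₂`. -/
theorem statement16
    (f₁ : (ℝ → ℝ → ℝ) → (ℝ → ℝ → ℝ))
    (hgauge : ∀ M, IsMorseGauge M → IsMorseGauge (f₁ M))
    (hsub : ∀ (X : Type u) [inst : MetricSpace X], GeodesicSpace X →
      ∀ (M : ℝ → ℝ → ℝ), IsMorseGauge M →
      ∀ (g : ℝ → X) (I J : Set ℝ),
        IsGeodesicOn g I → IsMorseWith M g I → J ⊆ I → J.OrdConnected →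
        IsMorseWith (f₁ M) g J)
    (htriangle : ∀ (X : Type u) [inst : MetricSpace X], GeodesicSpace X →
      ∀ (M : ℝ → ℝ → ℝ), IsMorseGauge M →
      ∀ (α β g : ℝ → X) (L₁ L₂ L₃ : ℝ),
        0 ≤ L₁ → 0 ≤ L₂ → 0 ≤ L₃ →
        IsGeodesicOn α (Icc 0 L₁) → IsGeodesicOn β (Icc 0 L₂) → IsGeodesicOn g (Icc 0 L₃) →
        α 0 = β 0 → g 0 = α L₁ → g L₃ = β L₂ →
        IsMorseWith M α (Icc 0 L₁) → IsMorseWith M β (Icc 0 L₂) →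
        IsMorseWith (f₁ M) g (Icc 0 L₃)) :
    ∃ D₇ : (ℝ → ℝ → ℝ) → ℝ → ℝ,
      ∀ (X : Type u) [inst : MetricSpace X], GeodesicSpace X →
        ∀ (M : ℝ → ℝ → ℝ), IsMorseGauge M →
        ∀ (W : Set X) (D : ℝ) (γ₁ γ₂ : ℝ → X) (t₁ t₂ : ℝ),
          (∀ (g : ℝ → X) (L : ℝ), 0 ≤ L → IsGeodesicOn g (Icc 0 L) →
            g 0 ∈ W → g L ∈ W → IsMorseWith (f₁ (f₁ M)) g (Icc 0 L) → L ≤ D) →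
          IsGeodesicOn γ₁ (Ici 0) → IsGeodesicOn γ₂ (Ici 0) → γ₁ 0 = γ₂ 0 →
          IsMorseWith M γ₁ (Ici 0) → IsMorseWith M γ₂ (Ici 0) →
          0 ≤ t₁ → 0 ≤ t₂ → γ₁ t₁ ∈ W → γ₂ t₂ ∈ W →
          ∀ s, 0 ≤ s → s ≤ max t₁ t₂ → dist (γ₁ s) (γ₂ s) ≤ D₇ M D := by
  refine ⟨fun M D => 2 * M 1 (2 * max D 0), ?_⟩
  intro X _ hX M hM W D γ₁ γ₂ t₁ t₂ hW hγ₁ hγ₂ h0 hM₁ hM₂ ht₁ ht₂ hw₁ hw₂ s hs hst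
  obtain ⟨g, hg0, hgL, hg⟩ := hX (γ₁ t₁) (γ₂ t₂)
  have hgM : IsMorseWith (f₁ (f₁ M)) g (Icc 0 (dist (γ₁ t₁) (γ₂ t₂))) :=
    htriangle X hX (f₁ M) (hgauge M hM) γ₁ γ₂ g t₁ t₂ _ ht₁ ht₂ dist_nonneg
      (hγ₁.mono Icc_subset_Ici_self) (hγ₂.mono Icc_subset_Ici_self) hg h0 hg0 hgL
      (hsub X hX M hM γ₁ _ _ hγ₁ hM₁ Icc_subset_Ici_self ordConnected_Icc)
      (hsub X hX M hM γ₂ _ _ hγ₂ hM₂ Icc_subset_Ici_self ordConnected_Icc)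
  have hD : 2 * dist (γ₁ t₁) (γ₂ t₂) ≤ 2 * max D 0 := by
    have := hW g _ dist_nonneg hg (by rwa [hg0]) (by rwa [hgL]) hgM
    linarith [le_max_left D 0]
  rcases le_or_gt s t₂ with hs₂ | hs₂
  · exact dist_apply_le_of_isMorseWith_of_dist_le hX hγ₁ hM₁ hγ₂ h0 ht₁ ht₂
      (by rwa [dist_comm]) hs hs₂
  · rw [dist_comm]
    exact dist_apply_le_of_isMorseWith_of_dist_le hX hγ₂ hM₂ hγ₁ h0.symm ht₂ ht₁ hD hs
      (le_max_iff.1 hst |>.resolve_right hs₂.not_ge)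
end
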